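/- Suppose Φ ⊆ {I, O, U} and let I be an interpretation with quotient I/∼ by the largest L_Φ-auto-bisimulation. Then: (1) for every terminological axiom C ⊑ D and every concept assertion C(a) in L_Φ, I satisfies it iff I/∼ satisfies it; (2) for every role inclusion axiom (ε ⊑ r or R₁∘…∘R_k ⊑ r with basic roles R_i) and every assertion of the form R(a,b) or a = b, if I satisfies it then I/∼ satisfies it. -/

import Mathlib

/-- A set of DL-features (subset of {I, O, Q, U, Self}). -/
structure DLFeat where
  hasI : Bool
  hasO : Bool
  hasQ : Bool
  hasU : Bool
  hasSelf : Bool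

/-- An interpretation with concept names `CN`, role names `RN`, individual names `IN`
and domain `D`. -/
structure Interp (CN RN IN : Type) (D : Type) where
  cInt : CN → Set D
  rInt : RN → D → D → Prop
  iInt : IN → D

/-- Interpretation of a basic role: a role name, possibly inverted. -/
def brInt {CN RN IN D : Type} (I : Interp CN RN IN D) (R : RN × Bool) (x y : D) : Prop :=
  if R.2 then I.rInt R.1 y x else I.rInt R.1 x y

mutual
/-- Concepts of the full language (membership in `L_Φ` is a separate predicate). -/
inductive DLConcept (CN RN IN : Type) : Type where
  | atom (A : CN)
  | top
  | bot
  | neg (C : DLConcept CN RN IN)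
  | conj (C D : DLConcept CN RN IN)
  | disj (C D : DLConcept CN RN IN)
  | all (R : DLRole CN RN IN) (C : DLConcept CN RN IN)
  | ex (R : DLRole CN RN IN) (C : DLConcept CN RN IN)
  | nom (a : IN)
  | atLeast (n : ℕ) (r : RN) (inverted : Bool) (C : DLConcept CN RN IN)
  | atMost (n : ℕ) (r : RN) (inverted : Bool) (C : DLConcept CN RN IN)
  | exSelf (r : RN)
/-- Roles of the full language. -/
inductive DLRole (CN RN IN : Type) : Type where
  | name (r : RN)
  | eps
  | comp (R S : DLRole CN RN IN)
  | runion (R S : DLRole CN RN IN)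
  | star (R : DLRole CN RN IN)
  | test (C : DLConcept CN RN IN)
  | inv (r : RN)
  | univ
end

mutual
/-- The concept belongs to the language `L_Φ`. -/
def DLConcept.inL {CN RN IN : Type} (Φ : DLFeat) : DLConcept CN RN IN → Prop
  | .atom _ => True
  | .top => True
  | .bot => True
  | .neg C => C.inL Φ
  | .conj C D => C.inL Φ ∧ D.inL Φ
  | .disj C D => C.inL Φ ∧ D.inL Φ
  | .all R C => R.inL Φ ∧ C.inL Φ
  | .ex R C => R.inL Φ ∧ C.inL Φ
  | .nom _ => Φ.hasO = true
  | .atLeast _ _ b C => Φ.hasQ = true ∧ (b = true → Φ.hasI = true) ∧ C.inL Φ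
  | .atMost _ _ b C => Φ.hasQ = true ∧ (b = true → Φ.hasI = true) ∧ C.inL Φ
  | .exSelf _ => Φ.hasSelf = true
/-- The role belongs to the language `L_Φ`. -/
def DLRole.inL {CN RN IN : Type} (Φ : DLFeat) : DLRole CN RN IN → Prop
  | .name _ => True
  | .eps => True
  | .comp R S => R.inL Φ ∧ S.inL Φ
  | .runion R S => R.inL Φ ∧ S.inL Φ
  | .star R => R.inL Φ
  | .test C => C.inL Φ
  | .inv _ => Φ.hasI = true
  | .univ => Φ.hasU = true
end

mutual
/-- Semantics of concepts. -/
def DLConcept.sem {CN RN IN D : Type} (I : Interp CN RN IN D) : DLConcept CN RN IN → Set D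
  | .atom A => I.cInt A
  | .top => Set.univ
  | .bot => ∅
  | .neg C => (DLConcept.sem I C)ᶜ
  | .conj C C' => DLConcept.sem I C ∩ DLConcept.sem I C'
  | .disj C C' => DLConcept.sem I C ∪ DLConcept.sem I C'
  | .all R C => {x | ∀ y, DLRole.sem I R x y → y ∈ DLConcept.sem I C}
  | .ex R C => {x | ∃ y, DLRole.sem I R x y ∧ y ∈ DLConcept.sem I C}
  | .nom a => {I.iInt a}
  | .atLeast n r b C =>
      {x | (n : Cardinal) ≤ Cardinal.mk {y // brInt I (r, b) x y ∧ y ∈ DLConcept.sem I C}}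
  | .atMost n r b C =>
      {x | Cardinal.mk {y // brInt I (r, b) x y ∧ y ∈ DLConcept.sem I C} ≤ (n : Cardinal)}
  | .exSelf r => {x | I.rInt r x x}
/-- Semantics of roles. -/
def DLRole.sem {CN RN IN D : Type} (I : Interp CN RN IN D) : DLRole CN RN IN → D → D → Prop
  | .name r => I.rInt r
  | .eps => Eq
  | .comp R S => Relation.Comp (DLRole.sem I R) (DLRole.sem I S)
  | .runion R S => fun x y => DLRole.sem I R x y ∨ DLRole.sem I S x y
  | .star R => Relation.ReflTransGen (DLRole.sem I R)
  | .test C => fun x y => x = y ∧ x ∈ DLConcept.sem I C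
  | .inv r => fun x y => I.rInt r y x
  | .univ => fun _ _ => True
end

/-- `Z` is an `L_Φ`-bisimulation between `I` and `I'`. -/
def Bisim {CN RN IN D D' : Type} (Φ : DLFeat) (I : Interp CN RN IN D)
    (I' : Interp CN RN IN D') (Z : D → D' → Prop) : Prop :=
  (∀ a : IN, Z (I.iInt a) (I'.iInt a)) ∧
  (∀ (A : CN) x x', Z x x' → (x ∈ I.cInt A ↔ x' ∈ I'.cInt A)) ∧
  (∀ (r : RN) x x' y, Z x x' → I.rInt r x y → ∃ y', Z y y' ∧ I'.rInt r x' y') ∧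
  (∀ (r : RN) x x' y', Z x x' → I'.rInt r x' y' → ∃ y, Z y y' ∧ I.rInt r x y) ∧
  (Φ.hasI = true →
    (∀ (r : RN) x x' y, Z x x' → I.rInt r y x → ∃ y', Z y y' ∧ I'.rInt r y' x') ∧
    (∀ (r : RN) x x' y', Z x x' → I'.rInt r y' x' → ∃ y, Z y y' ∧ I.rInt r y x)) ∧
  (Φ.hasO = true → ∀ (a : IN) x x', Z x x' → (x = I.iInt a ↔ x' = I'.iInt a)) ∧
  (Φ.hasQ = true → ∀ (r : RN) x x', Z x x' →
    ∃ h : {y // I.rInt r x y} ≃ {y' // I'.rInt r x' y'}, ∀ y, Z y.1 (h y).1) ∧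
  (Φ.hasQ = true → Φ.hasI = true → ∀ (r : RN) x x', Z x x' →
    ∃ h : {y // I.rInt r y x} ≃ {y' // I'.rInt r y' x'}, ∀ y, Z y.1 (h y).1) ∧
  (Φ.hasU = true → (∀ x, ∃ x', Z x x') ∧ (∀ x', ∃ x, Z x x')) ∧
  (Φ.hasSelf = true → ∀ (r : RN) x x', Z x x' → (I.rInt r x x ↔ I'.rInt r x' x'))

/-- One step along a basic role (role name, or inverse of a role name if `I ∈ Φ`). -/
def basicStep {CN RN IN D : Type} (Φ : DLFeat) (I : Interp CN RN IN D) (x y : D) : Prop :=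
  ∃ r : RN, I.rInt r x y ∨ (Φ.hasI = true ∧ I.rInt r y x)

/-- `I` is unreachable-objects-free: every element is reachable from some named
individual via a finite path of basic-role edges. -/
def UOF {CN RN IN D : Type} (Φ : DLFeat) (I : Interp CN RN IN D) : Prop :=
  ∀ x : D, ∃ a : IN, Relation.ReflTransGen (basicStep Φ I) (I.iInt a) x

/-- `I` validates the GCI `C ⊑ C'`. -/
def satGCI {CN RN IN D : Type} (I : Interp CN RN IN D) (C C' : DLConcept CN RN IN) : Prop :=
  DLConcept.sem I C ⊆ DLConcept.sem I C'

/-- `I` is a model of the TBox `T`. -/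
def modelsTBox {CN RN IN D : Type} (I : Interp CN RN IN D)
    (T : Set (DLConcept CN RN IN × DLConcept CN RN IN)) : Prop :=
  ∀ p ∈ T, satGCI I p.1 p.2

/-- Individual assertions. -/
inductive Assertion (CN RN IN : Type) : Type where
  | conc (C : DLConcept CN RN IN) (a : IN)
  | rolePos (R : DLRole CN RN IN) (a b : IN)
  | roleNeg (R : DLRole CN RN IN) (a b : IN)
  | eq (a b : IN)
  | neq (a b : IN)

/-- The assertion belongs to `L_Φ`. -/
def Assertion.inL {CN RN IN : Type} (Φ : DLFeat) : Assertion CN RN IN → Prop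
  | .conc C _ => C.inL Φ
  | .rolePos R _ _ => R.inL Φ
  | .roleNeg R _ _ => R.inL Φ
  | .eq _ _ => True
  | .neq _ _ => True

/-- `I` satisfies the individual assertion. -/
def Assertion.sat {CN RN IN D : Type} (I : Interp CN RN IN D) : Assertion CN RN IN → Prop
  | .conc C a => I.iInt a ∈ DLConcept.sem I C
  | .rolePos R a b => DLRole.sem I R (I.iInt a) (I.iInt b)
  | .roleNeg R a b => ¬ DLRole.sem I R (I.iInt a) (I.iInt b)
  | .eq a b => I.iInt a = I.iInt b
  | .neq a b => I.iInt a ≠ I.iInt b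

/-- `I` is a model of the ABox `A`. -/
def modelsABox {CN RN IN D : Type} (I : Interp CN RN IN D) (A : Set (Assertion CN RN IN)) : Prop :=
  ∀ φ ∈ A, φ.sat I

/-- A role axiom `R₁ ∘ … ∘ R_k ⊑ r` (`ε ⊑ r` when the list is empty), the `R_i` basic roles. -/
structure RoleAx (RN : Type) where
  lhs : List (RN × Bool)
  rhs : RN

/-- The role axiom is in `L_Φ` (inverse basic roles only if `I ∈ Φ`). -/
def RoleAx.inL {RN : Type} (Φ : DLFeat) (ax : RoleAx RN) : Prop :=
  ∀ p ∈ ax.lhs, p.2 = true → Φ.hasI = true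

/-- Interpretation of a composition chain of basic roles (`ε` for the empty chain). -/
def chainInt {CN RN IN D : Type} (I : Interp CN RN IN D) : List (RN × Bool) → D → D → Prop
  | [] => Eq
  | R :: l => fun x z => ∃ y, brInt I R x y ∧ chainInt I l y z

/-- `I` validates the role axiom. -/
def satRoleAx {CN RN IN D : Type} (I : Interp CN RN IN D) (ax : RoleAx RN) : Prop :=
  ∀ x y, chainInt I ax.lhs x y → I.rInt ax.rhs x y

/-- `I` is a model of the RBox `R`. -/
def modelsRBox {CN RN IN D : Type} (I : Interp CN RN IN D) (R : Set (RoleAx RN)) : Prop :=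
  ∀ ax ∈ R, satRoleAx I ax

/-- `I'` is an r-extension of `I`. -/
def RExt {CN RN IN D : Type} (I I' : Interp CN RN IN D) : Prop :=
  I'.cInt = I.cInt ∧ I'.iInt = I.iInt ∧ ∀ (r : RN) x y, I.rInt r x y → I'.rInt r x y

/-- `I'` is the least r-extension of `I` validating the RBox `R`. -/
def LeastRExt {CN RN IN D : Type} (I : Interp CN RN IN D) (R : Set (RoleAx RN))
    (I' : Interp CN RN IN D) : Prop :=
  RExt I I' ∧ modelsRBox I' R ∧
    ∀ I'' : Interp CN RN IN D, RExt I I'' → modelsRBox I'' R →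
      ∀ (r : RN) x y, I'.rInt r x y → I''.rInt r x y

/-- `I` is finitely branching w.r.t. `L_Φ`. -/
def FinBranch {CN RN IN D : Type} (Φ : DLFeat) (I : Interp CN RN IN D) : Prop :=
  ∀ (r : RN) (x : D), {y | I.rInt r x y}.Finite ∧ (Φ.hasI = true → {y | I.rInt r y x}.Finite)

/-- `x` and `x'` are `L_Φ`-equivalent: they satisfy the same concepts of `L_Φ`. -/
def LEquiv {CN RN IN D D' : Type} (Φ : DLFeat) (I : Interp CN RN IN D)
    (I' : Interp CN RN IN D') (x : D) (x' : D') : Prop :=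
  ∀ C : DLConcept CN RN IN, C.inL Φ → (x ∈ DLConcept.sem I C ↔ x' ∈ DLConcept.sem I' C)

/-- The largest `L_Φ`-auto-bisimulation of `I` (union of all auto-bisimulations). -/
def gbisim {CN RN IN D : Type} (Φ : DLFeat) (I : Interp CN RN IN D) (x y : D) : Prop :=
  ∃ Z, Bisim Φ I I Z ∧ Z x y

/-- The quotient interpretation of `I` w.r.t. the largest `L_Φ`-auto-bisimulation. -/
def quotInterp {CN RN IN D : Type} (Φ : DLFeat) (I : Interp CN RN IN D) :
    Interp CN RN IN (Quot (gbisim Φ I)) where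
  cInt A := {q | ∃ x, Quot.mk _ x = q ∧ x ∈ I.cInt A}
  rInt r q q' := ∃ x y, Quot.mk _ x = q ∧ Quot.mk _ y = q' ∧ I.rInt r x y
  iInt a := Quot.mk _ (I.iInt a)

/-- A QS-interpretation: an interpretation together with multiplicity functions for
basic roles and self-loop sets for role names. -/
structure QSInterp (CN RN IN D : Type) where
  toInterp : Interp CN RN IN D
  QU : (RN × Bool) → D → D → ℕ
  SE : RN → Set D

/-- The defining positivity condition of QS-interpretations:
`QU R x y > 0` iff `R` connects `x` to `y`. -/
def QSInterp.Proper {CN RN IN D : Type} (J : QSInterp CN RN IN D) : Prop :=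
  ∀ (R : RN × Bool) x y, 0 < J.QU R x y ↔ brInt J.toInterp R x y

/-- `Σ {f y : y ∈ S}` as an extended natural number. -/
noncomputable def qsum {D : Type} (f : D → ℕ) (S : Set D) : ℕ∞ :=
  ⨆ (s : Finset D) (_ : ↑s ⊆ S), (∑ y ∈ s, f y : ℕ∞)

mutual
/-- Semantics of concepts in a QS-interpretation. -/
noncomputable def DLConcept.qsem {CN RN IN D : Type} (J : QSInterp CN RN IN D) :
    DLConcept CN RN IN → Set D
  | .atom A => J.toInterp.cInt A
  | .top => Set.univ
  | .bot => ∅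
  | .neg C => (DLConcept.qsem J C)ᶜ
  | .conj C C' => DLConcept.qsem J C ∩ DLConcept.qsem J C'
  | .disj C C' => DLConcept.qsem J C ∪ DLConcept.qsem J C'
  | .all R C => {x | ∀ y, DLRole.qsem J R x y → y ∈ DLConcept.qsem J C}
  | .ex R C => {x | ∃ y, DLRole.qsem J R x y ∧ y ∈ DLConcept.qsem J C}
  | .nom a => {J.toInterp.iInt a}
  | .atLeast n r b C => {x | (n : ℕ∞) ≤ qsum (J.QU (r, b) x) (DLConcept.qsem J C)}
  | .atMost n r b C => {x | qsum (J.QU (r, b) x) (DLConcept.qsem J C) ≤ (n : ℕ∞)}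
  | .exSelf r => J.SE r
/-- Semantics of roles in a QS-interpretation. -/
noncomputable def DLRole.qsem {CN RN IN D : Type} (J : QSInterp CN RN IN D) :
    DLRole CN RN IN → D → D → Prop
  | .name r => J.toInterp.rInt r
  | .eps => Eq
  | .comp R S => Relation.Comp (DLRole.qsem J R) (DLRole.qsem J S)
  | .runion R S => fun x y => DLRole.qsem J R x y ∨ DLRole.qsem J S x y
  | .star R => Relation.ReflTransGen (DLRole.qsem J R)
  | .test C => fun x y => x = y ∧ x ∈ DLConcept.qsem J C
  | .inv r => fun x y => J.toInterp.rInt r y x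
  | .univ => fun _ _ => True
end

/-- The quotient QS-interpretation of a traditional interpretation `I` w.r.t. the
largest `L_Φ`-auto-bisimulation. -/
noncomputable def qsQuot {CN RN IN D : Type} (Φ : DLFeat) (I : Interp CN RN IN D) :
    QSInterp CN RN IN (Quot (gbisim Φ I)) where
  toInterp := quotInterp Φ I
  QU R q q' := sSup {n | ∃ x, Quot.mk _ x = q ∧
    n = Set.ncard {y | Quot.mk (gbisim Φ I) y = q' ∧ brInt I R x y}}
  SE r := {q | ∃ x, Quot.mk _ x = q ∧ I.rInt r x x}

/-!
Bisimulations are closed under converse, composition and unions, so the largest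
auto-bisimulation `∼` is an equivalence relation and itself an auto-bisimulation. When
`Q, Self ∉ Φ`, the graph of `x ↦ [x]` is then an `L_Φ`-bisimulation from `I` onto `I/∼`:
an edge `[x₀] → [y₀]` of `I/∼` with `x₀ ∼ x` is transported along `∼` to an edge `x → y`
with `y₀ ∼ y`. As `L_Φ`-concepts are invariant under `L_Φ`-bisimulations and the projection
is surjective, (1) follows. For (2), a chain `R₁ ∘ … ∘ R_k` is itself an `L_Φ`-role, so a
chain from `[x]` in `I/∼` lifts to a chain from `x` in `I`, where the role axiom applies.
-/

section Bisimulation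

variable {CN RN IN D D' D'' : Type} {Φ : DLFeat}

theorem Bisim.refl (I : Interp CN RN IN D) : Bisim Φ I I Eq :=
  ⟨fun _ => rfl, fun _ _ _ h => h ▸ Iff.rfl, fun _ _ _ y h hr => ⟨y, rfl, h ▸ hr⟩,
    fun _ _ _ y h hr => ⟨y, rfl, h ▸ hr⟩,
    fun _ => ⟨fun _ _ _ y h hr => ⟨y, rfl, h ▸ hr⟩, fun _ _ _ y h hr => ⟨y, rfl, h ▸ hr⟩⟩,
    fun _ _ _ _ h => h ▸ Iff.rfl, fun _ _ _ _ h => h ▸ ⟨Equiv.refl _, fun _ => rfl⟩,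
    fun _ _ _ _ _ h => h ▸ ⟨Equiv.refl _, fun _ => rfl⟩,
    fun _ => ⟨fun x => ⟨x, rfl⟩, fun x => ⟨x, rfl⟩⟩, fun _ _ _ _ h => h ▸ Iff.rfl⟩

theorem Bisim.symm {I : Interp CN RN IN D} {I' : Interp CN RN IN D'} {Z : D → D' → Prop}
    (hZ : Bisim Φ I I' Z) : Bisim Φ I' I (flip Z) := by
  obtain ⟨hind, hatom, hforth, hback, hinv, hnom, hcount, hcount_inv, huniv, hself⟩ := hZ
  refine ⟨hind, fun A x' x h => (hatom A x x' h).symm, fun r x' x y' h hr => hback r x x' y' h hr,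
    fun r x' x y h hr => hforth r x x' y h hr,
    fun hI => ⟨fun r x' x y' h hr => (hinv hI).2 r x x' y' h hr,
      fun r x' x y h hr => (hinv hI).1 r x x' y h hr⟩,
    fun hO a x' x h => (hnom hO a x x' h).symm, fun hQ r x' x h => ?_,
    fun hQ hI r x' x h => ?_, fun hU => (huniv hU).symm,
    fun hS r x' x h => (hself hS r x x' h).symm⟩
  · obtain ⟨e, he⟩ := hcount hQ r x x' h
    exact ⟨e.symm, fun y' => by simpa [flip] using he (e.symm y')⟩
  · obtain ⟨e, he⟩ := hcount_inv hQ hI r x x' h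
    exact ⟨e.symm, fun y' => by simpa [flip] using he (e.symm y')⟩

theorem Bisim.comp {I : Interp CN RN IN D} {I' : Interp CN RN IN D'}
    {I'' : Interp CN RN IN D''} {Z : D → D' → Prop} {Z' : D' → D'' → Prop}
    (hZ : Bisim Φ I I' Z) (hZ' : Bisim Φ I' I'' Z') : Bisim Φ I I'' (Relation.Comp Z Z') := by
  obtain ⟨hind, hatom, hforth, hback, hinv, hnom, hcount, hcount_inv, huniv, hself⟩ := hZ
  obtain ⟨hind', hatom', hforth', hback', hinv', hnom', hcount', hcount_inv', huniv', hself'⟩ :=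
    hZ'
  refine ⟨fun a => ⟨_, hind a, hind' a⟩,
    fun A x x'' ⟨x', h, h'⟩ => (hatom A x x' h).trans (hatom' A x' x'' h'), ?_, ?_,
    fun hI => ⟨?_, ?_⟩, fun hO a x x'' ⟨x', h, h'⟩ => (hnom hO a x x' h).trans (hnom' hO a x' x'' h'),
    ?_, ?_, fun hU => ⟨?_, ?_⟩,
    fun hS r x x'' ⟨x', h, h'⟩ => (hself hS r x x' h).trans (hself' hS r x' x'' h')⟩
  · rintro r x x'' y ⟨x', h, h'⟩ hr
    obtain ⟨y', hy, hr'⟩ := hforth r x x' y h hr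
    obtain ⟨y'', hy', hr''⟩ := hforth' r x' x'' y' h' hr'
    exact ⟨y'', ⟨y', hy, hy'⟩, hr''⟩
  · rintro r x x'' y'' ⟨x', h, h'⟩ hr
    obtain ⟨y', hy', hr'⟩ := hback' r x' x'' y'' h' hr
    obtain ⟨y, hy, hr⟩ := hback r x x' y' h hr'
    exact ⟨y, ⟨y', hy, hy'⟩, hr⟩
  · rintro r x x'' y ⟨x', h, h'⟩ hr
    obtain ⟨y', hy, hr'⟩ := (hinv hI).1 r x x' y h hr
    obtain ⟨y'', hy', hr''⟩ := (hinv' hI).1 r x' x'' y' h' hr'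
    exact ⟨y'', ⟨y', hy, hy'⟩, hr''⟩
  · rintro r x x'' y'' ⟨x', h, h'⟩ hr
    obtain ⟨y', hy', hr'⟩ := (hinv' hI).2 r x' x'' y'' h' hr
    obtain ⟨y, hy, hr⟩ := (hinv hI).2 r x x' y' h hr'
    exact ⟨y, ⟨y', hy, hy'⟩, hr⟩
  · rintro hQ r x x'' ⟨x', h, h'⟩
    obtain ⟨e, he⟩ := hcount hQ r x x' h
    obtain ⟨e', he'⟩ := hcount' hQ r x' x'' h'
    exact ⟨e.trans e', fun y => ⟨_, he y, he' (e y)⟩⟩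
  · rintro hQ hI r x x'' ⟨x', h, h'⟩
    obtain ⟨e, he⟩ := hcount_inv hQ hI r x x' h
    obtain ⟨e', he'⟩ := hcount_inv' hQ hI r x' x'' h'
    exact ⟨e.trans e', fun y => ⟨_, he y, he' (e y)⟩⟩
  · intro x
    obtain ⟨x', h⟩ := (huniv hU).1 x
    obtain ⟨x'', h'⟩ := (huniv' hU).1 x'
    exact ⟨x'', x', h, h'⟩
  · intro x''
    obtain ⟨x', h'⟩ := (huniv' hU).2 x''
    obtain ⟨x, h⟩ := (huniv hU).2 x'
    exact ⟨x, x', h, h'⟩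

theorem Bisim.sUnion {I : Interp CN RN IN D} {I' : Interp CN RN IN D'}
    {𝒵 : Set (D → D' → Prop)} (h𝒵 : ∀ Z ∈ 𝒵, Bisim Φ I I' Z) (hne : 𝒵.Nonempty) :
    Bisim Φ I I' (fun x x' => ∃ Z ∈ 𝒵, Z x x') := by
  obtain ⟨Z₀, hZ₀⟩ := hne
  obtain ⟨hind₀, -, -, -, -, -, -, -, huniv₀, -⟩ := h𝒵 Z₀ hZ₀
  refine ⟨fun a => ⟨Z₀, hZ₀, hind₀ a⟩, ?_, ?_, ?_, fun hI => ⟨?_, ?_⟩, ?_, ?_, ?_,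
    fun hU => ⟨fun x => ?_, fun x' => ?_⟩, ?_⟩
  · rintro A x x' ⟨Z, hZ, h⟩
    exact (h𝒵 Z hZ).2.1 A x x' h
  · rintro r x x' y ⟨Z, hZ, h⟩ hr
    obtain ⟨-, -, hforth, -⟩ := h𝒵 Z hZ
    obtain ⟨y', hy, hr'⟩ := hforth r x x' y h hr
    exact ⟨y', ⟨Z, hZ, hy⟩, hr'⟩
  · rintro r x x' y' ⟨Z, hZ, h⟩ hr
    obtain ⟨-, -, -, hback, -⟩ := h𝒵 Z hZ
    obtain ⟨y, hy, hr'⟩ := hback r x x' y' h hr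
    exact ⟨y, ⟨Z, hZ, hy⟩, hr'⟩
  · rintro r x x' y ⟨Z, hZ, h⟩ hr
    obtain ⟨-, -, -, -, hinv, -⟩ := h𝒵 Z hZ
    obtain ⟨y', hy, hr'⟩ := (hinv hI).1 r x x' y h hr
    exact ⟨y', ⟨Z, hZ, hy⟩, hr'⟩
  · rintro r x x' y' ⟨Z, hZ, h⟩ hr
    obtain ⟨-, -, -, -, hinv, -⟩ := h𝒵 Z hZ
    obtain ⟨y, hy, hr'⟩ := (hinv hI).2 r x x' y' h hr
    exact ⟨y, ⟨Z, hZ, hy⟩, hr'⟩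
  · rintro hO a x x' ⟨Z, hZ, h⟩
    obtain ⟨-, -, -, -, -, hnom, -⟩ := h𝒵 Z hZ
    exact hnom hO a x x' h
  · rintro hQ r x x' ⟨Z, hZ, h⟩
    obtain ⟨-, -, -, -, -, -, hcount, -⟩ := h𝒵 Z hZ
    obtain ⟨e, he⟩ := hcount hQ r x x' h
    exact ⟨e, fun y => ⟨Z, hZ, he y⟩⟩
  · rintro hQ hI r x x' ⟨Z, hZ, h⟩
    obtain ⟨-, -, -, -, -, -, -, hcount_inv, -⟩ := h𝒵 Z hZ
    obtain ⟨e, he⟩ := hcount_inv hQ hI r x x' h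
    exact ⟨e, fun y => ⟨Z, hZ, he y⟩⟩
  · obtain ⟨x', h⟩ := (huniv₀ hU).1 x
    exact ⟨x', Z₀, hZ₀, h⟩
  · obtain ⟨x, h⟩ := (huniv₀ hU).2 x'
    exact ⟨x, Z₀, hZ₀, h⟩
  · rintro hS r x x' ⟨Z, hZ, h⟩
    obtain ⟨-, -, -, -, -, -, -, -, -, hself⟩ := h𝒵 Z hZ
    exact hself hS r x x' h

theorem Bisim.exists_brInt_equiv {I : Interp CN RN IN D} {I' : Interp CN RN IN D'}
    {Z : D → D' → Prop} (hZ : Bisim Φ I I' Z) (hQ : Φ.hasQ = true) {r : RN} {b : Bool}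
    (hb : b = true → Φ.hasI = true) {x : D} {x' : D'} (h : Z x x') :
    ∃ e : {y // brInt I (r, b) x y} ≃ {y' // brInt I' (r, b) x' y'}, ∀ y, Z y.1 (e y).1 := by
  obtain ⟨-, -, -, -, -, -, hcount, hcount_inv, -⟩ := hZ
  cases b
  · exact hcount hQ r x x' h
  · exact hcount_inv hQ (hb rfl) r x x' h

end Bisimulation

theorem Cardinal.mk_subtype_and_eq_of_equiv {α β : Type} {p q : α → Prop} {p' q' : β → Prop}
    (e : {a // p a} ≃ {b // p' b}) (h : ∀ a, q a.1 ↔ q' (e a).1) :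
    Cardinal.mk {a // p a ∧ q a} = Cardinal.mk {b // p' b ∧ q' b} :=
  Cardinal.mk_congr <| (Equiv.subtypeSubtypeEquivSubtypeInter p q).symm.trans <|
    (e.subtypeEquiv h).trans (Equiv.subtypeSubtypeEquivSubtypeInter p' q')

section Invariance

variable {CN RN IN : Type} {Φ : DLFeat}

mutual

theorem Bisim.mem_sem_iff : ∀ (C : DLConcept CN RN IN), C.inL Φ →
    ∀ {D D' : Type} {I : Interp CN RN IN D} {I' : Interp CN RN IN D'} {Z : D → D' → Prop}
      {x x'}, Bisim Φ I I' Z → Z x x' → (x ∈ C.sem I ↔ x' ∈ C.sem I')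
  | .atom A, _ => fun ⟨_, hatom, _⟩ h => hatom A _ _ h
  | .top, _ => fun _ _ => Iff.rfl
  | .bot, _ => fun _ _ => Iff.rfl
  | .neg C, hC => fun hZ h => not_congr (Bisim.mem_sem_iff C hC hZ h)
  | .conj C C', hC => fun hZ h =>
      and_congr (Bisim.mem_sem_iff C hC.1 hZ h) (Bisim.mem_sem_iff C' hC.2 hZ h)
  | .disj C C', hC => fun hZ h =>
      or_congr (Bisim.mem_sem_iff C hC.1 hZ h) (Bisim.mem_sem_iff C' hC.2 hZ h)
  | .all R C, hC => fun hZ h => by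
      constructor
      · intro hx y' hr
        obtain ⟨y, hy, hr'⟩ := Bisim.sem_forth R hC.1 hZ.symm h hr
        exact (Bisim.mem_sem_iff C hC.2 hZ hy).1 (hx y hr')
      · intro hx' y hr
        obtain ⟨y', hy, hr'⟩ := Bisim.sem_forth R hC.1 hZ h hr
        exact (Bisim.mem_sem_iff C hC.2 hZ hy).2 (hx' y' hr')
  | .ex R C, hC => fun hZ h => by
      constructor
      · rintro ⟨y, hr, hy⟩
        obtain ⟨y', hyy, hr'⟩ := Bisim.sem_forth R hC.1 hZ h hr
        exact ⟨y', hr', (Bisim.mem_sem_iff C hC.2 hZ hyy).1 hy⟩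
      · rintro ⟨y', hr, hy⟩
        obtain ⟨y, hyy, hr'⟩ := Bisim.sem_forth R hC.1 hZ.symm h hr
        exact ⟨y, hr', (Bisim.mem_sem_iff C hC.2 hZ hyy).2 hy⟩
  | .nom a, hC => fun ⟨_, _, _, _, _, hnom, _⟩ h => hnom hC a _ _ h
  | .atLeast n r b C, hC => fun hZ h => by
      obtain ⟨e, he⟩ := hZ.exists_brInt_equiv hC.1 hC.2.1 h
      simp only [DLConcept.sem, Set.mem_ofPred_eq]
      rw [Cardinal.mk_subtype_and_eq_of_equiv e fun y => Bisim.mem_sem_iff C hC.2.2 hZ (he y)]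
  | .atMost n r b C, hC => fun hZ h => by
      obtain ⟨e, he⟩ := hZ.exists_brInt_equiv hC.1 hC.2.1 h
      simp only [DLConcept.sem, Set.mem_ofPred_eq]
      rw [Cardinal.mk_subtype_and_eq_of_equiv e fun y => Bisim.mem_sem_iff C hC.2.2 hZ (he y)]
  | .exSelf r, hC => fun ⟨_, _, _, _, _, _, _, _, _, hself⟩ h => hself hC r _ _ h

theorem Bisim.sem_forth : ∀ (R : DLRole CN RN IN), R.inL Φ →
    ∀ {D D' : Type} {I : Interp CN RN IN D} {I' : Interp CN RN IN D'} {Z : D → D' → Prop}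
      {x x' y}, Bisim Φ I I' Z → Z x x' → R.sem I x y → ∃ y', Z y y' ∧ R.sem I' x' y'
  | .name r, _ => fun ⟨_, _, hforth, _⟩ h hr => hforth r _ _ _ h hr
  | .eps, _ => fun _ h hr => ⟨_, hr ▸ h, rfl⟩
  | .comp R S, hR => fun hZ h ⟨_, hm, hmy⟩ => by
      obtain ⟨m', hmm, hm'⟩ := Bisim.sem_forth R hR.1 hZ h hm
      obtain ⟨y', hy, hmy'⟩ := Bisim.sem_forth S hR.2 hZ hmm hmy
      exact ⟨y', hy, m', hm', hmy'⟩
  | .runion R S, hR => fun hZ h hr => by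
      rcases hr with hr | hr
      · obtain ⟨y', hy, hr'⟩ := Bisim.sem_forth R hR.1 hZ h hr
        exact ⟨y', hy, .inl hr'⟩
      · obtain ⟨y', hy, hr'⟩ := Bisim.sem_forth S hR.2 hZ h hr
        exact ⟨y', hy, .inr hr'⟩
  | .star R, hR => fun hZ h hr => by
      induction hr with
      | refl => exact ⟨_, h, .refl⟩
      | tail _ hstep ih =>
          obtain ⟨m', hm, hrm⟩ := ih
          obtain ⟨y', hy, hstep'⟩ := Bisim.sem_forth R hR hZ hm hstep
          exact ⟨y', hy, hrm.tail hstep'⟩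
  | .test C, hC => fun hZ h ⟨hxy, hx⟩ =>
      ⟨_, hxy ▸ h, rfl, (Bisim.mem_sem_iff C hC hZ h).1 hx⟩
  | .inv r, hR => fun ⟨_, _, _, _, hinv, _⟩ h hr => (hinv hR).1 r _ _ _ h hr
  | .univ, hR => fun ⟨_, _, _, _, _, _, _, _, huniv, _⟩ _ _ => by
      obtain ⟨y', hy⟩ := (huniv hR).1 _
      exact ⟨y', hy, trivial⟩

end

theorem Bisim.satGCI_of_surjective {D D' : Type} {I : Interp CN RN IN D}
    {I' : Interp CN RN IN D'} {Z : D → D' → Prop} (hZ : Bisim Φ I I' Z)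
    (hsurj : ∀ x', ∃ x, Z x x') {C C' : DLConcept CN RN IN} (hC : C.inL Φ) (hC' : C'.inL Φ)
    (hCC' : satGCI I C C') : satGCI I' C C' := by
  intro x' hx'
  obtain ⟨x, h⟩ := hsurj x'
  exact (hZ.mem_sem_iff C' hC' h).1 (hCC' ((hZ.mem_sem_iff C hC h).2 hx'))

end Invariance

section Quotient

variable {CN RN IN D : Type} {Φ : DLFeat}

theorem gbisim_equivalence (I : Interp CN RN IN D) : Equivalence (gbisim Φ I) where
  refl _ := ⟨Eq, Bisim.refl I, rfl⟩
  symm := fun ⟨Z, hZ, h⟩ => ⟨flip Z, hZ.symm, h⟩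
  trans := fun ⟨Z, hZ, hxy⟩ ⟨Z', hZ', hyz⟩ => ⟨Relation.Comp Z Z', hZ.comp hZ', _, hxy, hyz⟩

theorem quot_mk_eq_iff_gbisim {I : Interp CN RN IN D} {x y : D} :
    Quot.mk (gbisim Φ I) x = Quot.mk (gbisim Φ I) y ↔ gbisim Φ I x y :=
  Quot.eq.trans (gbisim_equivalence I).eqvGen_iff

theorem bisim_gbisim (I : Interp CN RN IN D) : Bisim Φ I I (gbisim Φ I) :=
  Bisim.sUnion (𝒵 := {Z | Bisim Φ I I Z}) (fun _ hZ => hZ) ⟨Eq, Bisim.refl I⟩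

theorem bisim_quotInterp (hQ : Φ.hasQ = false) (hS : Φ.hasSelf = false)
    (I : Interp CN RN IN D) : Bisim Φ I (quotInterp Φ I) (fun x q => Quot.mk _ x = q) := by
  obtain ⟨-, hatom, hforth, -, hinv, hnom, -⟩ := bisim_gbisim (Φ := Φ) I
  refine ⟨fun _ => rfl, ?_, ?_, ?_, fun hI => ⟨?_, ?_⟩, ?_, by simp [hQ], by simp [hQ],
    fun _ => ⟨fun x => ⟨_, rfl⟩, Quot.exists_rep⟩, by simp [hS]⟩
  · rintro A x _ rfl
    exact ⟨fun hx => ⟨x, rfl, hx⟩,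
      fun ⟨x₀, hx₀, hA⟩ => (hatom A x₀ x (quot_mk_eq_iff_gbisim.1 hx₀)).1 hA⟩
  · rintro r x _ y rfl hr
    exact ⟨_, rfl, x, y, rfl, rfl, hr⟩
  · rintro r x _ _ rfl ⟨x₀, y₀, hx₀, rfl, hr⟩
    obtain ⟨y, hy, hr'⟩ := hforth r x₀ x y₀ (quot_mk_eq_iff_gbisim.1 hx₀) hr
    exact ⟨y, (quot_mk_eq_iff_gbisim.2 hy).symm, hr'⟩
  · rintro r x _ y rfl hr
    exact ⟨_, rfl, y, x, rfl, rfl, hr⟩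
  · rintro r x _ _ rfl ⟨y₀, x₀, rfl, hx₀, hr⟩
    obtain ⟨y, hy, hr'⟩ := (hinv hI).1 r x₀ x y₀ (quot_mk_eq_iff_gbisim.1 hx₀) hr
    exact ⟨y, (quot_mk_eq_iff_gbisim.2 hy).symm, hr'⟩
  · rintro hO a x _ rfl
    exact ⟨congrArg _, fun h => (hnom hO a x (I.iInt a) (quot_mk_eq_iff_gbisim.1 h)).2 rfl⟩

end Quotient

section RoleAxioms

variable {CN RN IN D : Type} {Φ : DLFeat}

def basicRole : RN × Bool → DLRole CN RN IN
  | (r, false) => .name r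
  | (r, true) => .inv r

def chainRole (l : List (RN × Bool)) : DLRole CN RN IN :=
  l.foldr (fun R S => .comp (basicRole R) S) .eps

theorem sem_chainRole_iff (I : Interp CN RN IN D) :
    ∀ (l : List (RN × Bool)) (x y : D), (chainRole l).sem I x y ↔ chainInt I l x y
  | [], _, _ => Iff.rfl
  | (_, b) :: l, _, y =>
      exists_congr fun z => and_congr (by cases b <;> rfl) (sem_chainRole_iff I l z y)

theorem inL_chainRole :
    ∀ {l : List (RN × Bool)}, (∀ p ∈ l, p.2 = true → Φ.hasI = true) →
      (chainRole l : DLRole CN RN IN).inL Φ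
  | [], _ => trivial
  | (_, b) :: _, hl =>
      ⟨by cases b; exacts [trivial, hl _ List.mem_cons_self rfl],
        inL_chainRole fun p hp => hl p (List.mem_cons_of_mem _ hp)⟩

theorem satRoleAx_quotInterp (hQ : Φ.hasQ = false) (hS : Φ.hasSelf = false)
    {I : Interp CN RN IN D} {ax : RoleAx RN} (hax : ax.inL Φ) (h : satRoleAx I ax) :
    satRoleAx (quotInterp Φ I) ax := by
  intro q q' hqq'
  obtain ⟨x, rfl⟩ := Quot.exists_rep q
  obtain ⟨y, rfl, hxy⟩ := (bisim_quotInterp hQ hS I).symm.sem_forth (chainRole ax.lhs)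
    (inL_chainRole hax) rfl ((sem_chainRole_iff _ ax.lhs _ _).2 hqq')
  exact ⟨x, y, rfl, rfl, h x y ((sem_chainRole_iff I ax.lhs x y).1 hxy)⟩

end RoleAxioms

/-- For `Φ ⊆ {I,O,U}`: (1) terminological axioms and concept assertions
of `L_Φ` are invariant under passing to the quotient by the largest
`L_Φ`-auto-bisimulation; (2) role inclusion axioms and assertions `R(a,b)`, `a = b`
are preserved. -/
theorem quotient_preservation {CN RN IN D : Type} (Φ : DLFeat)
    (hQ : Φ.hasQ = false) (hS : Φ.hasSelf = false) (I : Interp CN RN IN D) :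
    (∀ C C' : DLConcept CN RN IN, C.inL Φ → C'.inL Φ →
      (satGCI I C C' ↔ satGCI (quotInterp Φ I) C C')) ∧
    (∀ (C : DLConcept CN RN IN) (a : IN), C.inL Φ →
      (I.iInt a ∈ DLConcept.sem I C ↔
        (quotInterp Φ I).iInt a ∈ DLConcept.sem (quotInterp Φ I) C)) ∧
    (∀ ax : RoleAx RN, ax.inL Φ → satRoleAx I ax → satRoleAx (quotInterp Φ I) ax) ∧
    (∀ (R : DLRole CN RN IN) (a b : IN), R.inL Φ →
      DLRole.sem I R (I.iInt a) (I.iInt b) →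
      DLRole.sem (quotInterp Φ I) R ((quotInterp Φ I).iInt a) ((quotInterp Φ I).iInt b)) ∧
    (∀ a b : IN, I.iInt a = I.iInt b →
      (quotInterp Φ I).iInt a = (quotInterp Φ I).iInt b) := by
  have hπ := bisim_quotInterp hQ hS I
  refine ⟨fun C C' hC hC' => ⟨hπ.satGCI_of_surjective Quot.exists_rep hC hC',
      hπ.symm.satGCI_of_surjective (fun x => ⟨_, rfl⟩) hC hC'⟩,
    fun C a hC => hπ.mem_sem_iff C hC rfl, fun ax hax => satRoleAx_quotInterp hQ hS hax,
    fun R a b hR hab => ?_, fun a b => congrArg _⟩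
  obtain ⟨_, rfl, h⟩ := hπ.sem_forth R hR rfl hab
  exact h
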